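/- arXiv:2512.24417 — 2 statements merged into one kernel-verified Lean document; each statement's English description precedes it below -/
import Mathlib

section
/- A finitely additive probability measure on a Boolean algebra B is equivalent to a natural family of probability distributions: giving a function m : B → [0,1] with m(⊤) = 1 and m(a ⊔ b) = m(a) + m(b) whenever a ⊓ b = ⊥ is equivalent to giving, for each n and each n-tuple (b₁,…,b_n) of pairwise disjoint elements with b₁ ⊔ ⋯ ⊔ b_n = ⊤, an element of I(n) (a probability vector), compatibly with all maps of finite index sets. -/
/-- A finitely additive probability measure on a Boolean algebra `B`. -/
structure FinAddProb (B : Type*) [BooleanAlgebra B] where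
  m : B → ℝ
  nonneg : ∀ a, 0 ≤ m a
  le_one : ∀ a, m a ≤ 1
  top : m ⊤ = 1
  add : ∀ a b : B, a ⊓ b = ⊥ → m (a ⊔ b) = m a + m b

/-- An `n`-partition of unity in `B`: pairwise disjoint elements with supremum `⊤`. -/
def IsPartition {B : Type*} [BooleanAlgebra B] {n : ℕ} (p : Fin n → B) : Prop :=
  (∀ i j, i ≠ j → p i ⊓ p j = ⊥) ∧ Finset.univ.sup p = ⊤

/-- Pushforward of a partition along a map of finite index sets. -/
noncomputable def pushPart {B : Type*} [BooleanAlgebra B] {m n : ℕ}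
    (f : Fin m → Fin n) (p : Fin m → B) : Fin n → B :=
  fun i => (Finset.univ.filter (fun j => f j = i)).sup p

/-- The action of `f : Fin m → Fin n` on probability vectors. -/
noncomputable def Iact {m n : ℕ} (f : Fin m → Fin n) (φ : Fin m → ℝ) : Fin n → ℝ :=
  fun i => ∑ j ∈ Finset.univ.filter (fun j => f j = i), φ j

/-- A natural family of probability vectors indexed by partitions of unity of `B`. -/
structure NatFamily (B : Type*) [BooleanAlgebra B] where
  vec : ∀ (n : ℕ) (p : Fin n → B), IsPartition p → Fin n → ℝ
  nonneg : ∀ n p hp i, 0 ≤ vec n p hp i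
  sum_one : ∀ n p hp, ∑ i, vec n p hp i = 1
  natural : ∀ (m n : ℕ) (f : Fin m → Fin n) (p : Fin m → B) (hp : IsPartition p)
    (hq : IsPartition (pushPart f p)),
    vec n (pushPart f p) hq = Iact f (vec m p hp)


/-!
A measure `μ` gives the family `p ↦ (μ (p i))ᵢ`, and naturality is finite additivity over the
fibres of `f`. Conversely, collapsing a partition `p` onto the cell `i` and the rest of it shows
that a natural family `Φ` is determined by two-cell partitions: `Φ(p)ᵢ = Φ(p i, (p i)ᶜ)₀ =: m (p i)`.
Hence `∑ᵢ m (p i) = 1` for every partition, and comparing the partitions `(a, b, (a ⊔ b)ᶜ)` and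
`(a ⊔ b, (a ⊔ b)ᶜ)` shows that `m` is additive.
-/

open Function

section

variable {B : Type*} [BooleanAlgebra B]

namespace FinAddProb

@[ext]
lemma ext {μ ν : FinAddProb B} (h : μ.m = ν.m) : μ = ν := by
  cases μ; cases ν; congr

variable (μ : FinAddProb B)

lemma m_bot : μ.m ⊥ = 0 := by
  have := μ.add ⊥ ⊥ (inf_idem ⊥)
  rw [sup_idem] at this
  linarith

lemma m_finset_sup {ι : Type*} {p : ι → B} (hp : Pairwise (Disjoint on p)) (s : Finset ι) :
    μ.m (s.sup p) = ∑ i ∈ s, μ.m (p i) := by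
  induction s using Finset.cons_induction with
  | empty => simp [μ.m_bot]
  | cons a s ha ih =>
    rw [Finset.sup_cons, Finset.sum_cons, μ.add _ _ ?_, ih]
    refine disjoint_iff.1 (Finset.disjoint_sup_right.2 fun i hi => hp ?_)
    rintro rfl
    exact ha hi

end FinAddProb

lemma IsPartition.pairwise_disjoint {n : ℕ} {p : Fin n → B} (hp : IsPartition p) :
    Pairwise (Disjoint on p) :=
  fun i j hij => disjoint_iff.2 (hp.1 i j hij)

lemma IsPartition.sup_erase {n : ℕ} {p : Fin n → B} (hp : IsPartition p) (i : Fin n) :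
    (Finset.univ.erase i).sup p = (p i)ᶜ := by
  refine (compl_unique ?_ ?_).symm
  · exact disjoint_iff.1 (Finset.disjoint_sup_right.2 fun j hj =>
      hp.pairwise_disjoint (Finset.ne_of_mem_erase hj).symm)
  · rw [← hp.2, ← Finset.sup_insert, Finset.insert_erase (Finset.mem_univ i)]

lemma isPartition_top : IsPartition (fun _ : Fin 1 => (⊤ : B)) :=
  ⟨fun i j hij => absurd (Subsingleton.elim i j) hij, by simp⟩

lemma isPartition_compl (a : B) : IsPartition ![a, aᶜ] := by
  refine ⟨fun i j hij => ?_, ?_⟩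
  · fin_cases i <;> fin_cases j <;> simp_all
  · simp [Fin.univ_succ]

lemma isPartition_sup_compl {a b : B} (hab : a ⊓ b = ⊥) : IsPartition ![a, b, (a ⊔ b)ᶜ] := by
  have ha : a ⊓ (a ⊔ b)ᶜ = ⊥ := (disjoint_compl_right.mono_left le_sup_left).eq_bot
  have hb : b ⊓ (a ⊔ b)ᶜ = ⊥ := (disjoint_compl_right.mono_left le_sup_right).eq_bot
  refine ⟨fun i j hij => ?_, ?_⟩
  · fin_cases i <;> fin_cases j <;> simp_all [inf_comm]
  · simp [Fin.univ_succ, ← sup_assoc, -compl_sup]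

lemma IsPartition.pushPart_ite_eq {n : ℕ} {p : Fin n → B} (hp : IsPartition p) (i : Fin n) :
    pushPart (fun j => if j = i then 0 else 1) p = ![p i, (p i)ᶜ] := by
  funext k
  fin_cases k <;> simp [pushPart, Finset.filter_eq', Finset.filter_ne', hp.sup_erase]

def FinAddProb.toNatFamily (μ : FinAddProb B) : NatFamily B where
  vec _ p _ i := μ.m (p i)
  nonneg _ _ _ _ := μ.nonneg _
  sum_one _ p hp := by rw [← μ.m_finset_sup hp.pairwise_disjoint, hp.2, μ.top]
  natural _ _ _ p hp _ := funext fun _ => μ.m_finset_sup hp.pairwise_disjoint _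

namespace NatFamily

variable (Φ : NatFamily B)

lemma vec_eq_Iact_of_pushPart_eq {m n : ℕ} {f : Fin m → Fin n} {p : Fin m → B}
    {q : Fin n → B} (h : pushPart f p = q) (hp : IsPartition p) (hq : IsPartition q) :
    Φ.vec n q hq = Iact f (Φ.vec m p hp) := by
  subst h
  exact Φ.natural m n f p hp hq

def mass (a : B) : ℝ := Φ.vec 2 ![a, aᶜ] (isPartition_compl a) 0

lemma vec_eq_mass {n : ℕ} (p : Fin n → B) (hp : IsPartition p) (i : Fin n) :
    Φ.vec n p hp i = Φ.mass (p i) := by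
  have h := congrFun (Φ.vec_eq_Iact_of_pushPart_eq (hp.pushPart_ite_eq i) hp
    (isPartition_compl (p i))) 0
  simpa [Iact, Finset.filter_eq', mass] using h.symm

lemma sum_mass {n : ℕ} {p : Fin n → B} (hp : IsPartition p) : ∑ i, Φ.mass (p i) = 1 := by
  simpa only [Φ.vec_eq_mass p hp] using Φ.sum_one n p hp

lemma mass_add_mass_compl (a : B) : Φ.mass a + Φ.mass aᶜ = 1 := by
  simpa using Φ.sum_mass (isPartition_compl a)

lemma mass_sup {a b : B} (hab : a ⊓ b = ⊥) : Φ.mass (a ⊔ b) = Φ.mass a + Φ.mass b := by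
  have h3 := Φ.sum_mass (isPartition_sup_compl hab)
  simp only [Fin.sum_univ_three, Matrix.cons_val_zero, Matrix.cons_val_one,
    Matrix.cons_val_two, Matrix.head_cons, Matrix.tail_cons] at h3
  linarith [Φ.mass_add_mass_compl (a ⊔ b)]

lemma mass_nonneg (a : B) : 0 ≤ Φ.mass a := Φ.nonneg _ _ _ _

def toFinAddProb : FinAddProb B where
  m := Φ.mass
  nonneg := Φ.mass_nonneg
  le_one a := by linarith [Φ.mass_add_mass_compl a, Φ.mass_nonneg aᶜ]
  top := by simpa using Φ.sum_mass isPartition_top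
  add _ _ := Φ.mass_sup

end NatFamily

end

/-- Finitely additive probability measures on `B` correspond exactly (via
`Φ.vec n p hp i = μ.m (p i)`) to natural families of probability vectors on
partitions of unity: the restriction map is well-defined and bijective. -/
theorem stmt2 {B : Type*} [BooleanAlgebra B] :
    (∀ μ : FinAddProb B, ∃ Φ : NatFamily B,
      ∀ n (p : Fin n → B) (hp : IsPartition p) (i : Fin n), Φ.vec n p hp i = μ.m (p i)) ∧
    (∀ Φ : NatFamily B, ∃! μ : FinAddProb B,
      ∀ n (p : Fin n → B) (hp : IsPartition p) (i : Fin n), Φ.vec n p hp i = μ.m (p i)) := by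
  refine ⟨fun μ => ⟨μ.toNatFamily, fun _ _ _ _ => rfl⟩,
    fun Φ => ⟨Φ.toFinAddProb, fun _ => Φ.vec_eq_mass, fun μ hμ => ?_⟩⟩
  ext a
  exact (hμ 2 ![a, aᶜ] (isPartition_compl a) 0).symm
end

section
/- Conditionals exist for finite-marginal kernels into a profinite limit: let Y be a finite set and (Z_j)_j a cofiltered family of finite sets with limit L, and let p be a probability measure on Y × L (i.e., a compatible family of probability vectors p_j ∈ I(Y × Z_j)). Then there exists a kernel k : Y → (probability measures on L) such that for every j and all (y, z) ∈ Y × Z_j, p_j(y, z) = (∑_{z'} p_j(y, z')) · k(y)_j(z), where k(y)_j denotes the component of k(y) at level j. -/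
/-!
For `y` with positive marginal `M y = ∑ z, p j y z` (equal at comparable levels),
the conditional is `p j y · / M y`; it is compatible because compatibility is linear. Where
`M y = 0`, the whole row `p j y` vanishes, so any compatible probability family works, and the
`Y`-marginal `∑ y', p j y' ·` of `p` is one that needs no choice.
-/

open Finset

section

variable {J : Type*} [Preorder J] {Z : J → Type*} [∀ j, Fintype (Z j)] [∀ j, DecidableEq (Z j)]

def IsCompatibleFamily (π : ∀ {i j : J}, i ≤ j → Z j → Z i) (f : ∀ j, Z j → ℝ) : Prop :=
  ∀ ⦃i j : J⦄ (h : i ≤ j) (z : Z i), f i z = ∑ z' ∈ univ.filter (fun z' => π h z' = z), f j z'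

variable {π : ∀ {i j : J}, i ≤ j → Z j → Z i}

theorem IsCompatibleFamily.sum_eq {f : ∀ j, Z j → ℝ} (hf : IsCompatibleFamily π f)
    {i j : J} (h : i ≤ j) : ∑ z, f i z = ∑ z, f j z :=
  (sum_congr rfl fun z _ => hf h z).trans (sum_fiberwise _ _ _)

theorem IsCompatibleFamily.div_const {f : ∀ j, Z j → ℝ} (hf : IsCompatibleFamily π f) (c : ℝ) :
    IsCompatibleFamily π fun j z => f j z / c := by
  intro i j h z
  simp only [hf h z, sum_div]

theorem isCompatibleFamily_sum {Y : Type*} [Fintype Y] {f : Y → ∀ j, Z j → ℝ}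
    (hf : ∀ y, IsCompatibleFamily π (f y)) :
    IsCompatibleFamily π fun j z => ∑ y, f y j z := by
  intro i j h z
  simp_rw [hf _ h z]
  exact sum_comm

end

section

variable {J : Type*} {Y : Type*} [Fintype Y] {Z : J → Type*} [∀ j, Fintype (Z j)]

noncomputable def condKernel (p : ∀ j, Y → Z j → ℝ) (y : Y) (j : J) (z : Z j) : ℝ :=
  if ∑ z', p j y z' = 0 then ∑ y', p j y' z else p j y z / ∑ z', p j y z'

variable {p : ∀ j, Y → Z j → ℝ}

theorem condKernel_nonneg (pnn : ∀ j y z, 0 ≤ p j y z) (y : Y) (j : J) (z : Z j) :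
    0 ≤ condKernel p y j z := by
  unfold condKernel
  split_ifs
  · exact sum_nonneg fun y' _ => pnn j y' z
  · exact div_nonneg (pnn j y z) (sum_nonneg fun z' _ => pnn j y z')

theorem sum_condKernel {j : J} (psum : ∑ y, ∑ z, p j y z = 1) (y : Y) :
    ∑ z, condKernel p y j z = 1 := by
  unfold condKernel
  split_ifs with hy
  · rw [sum_comm, psum]
  · rw [← sum_div, div_self hy]

theorem marginal_mul_condKernel (pnn : ∀ j y z, 0 ≤ p j y z) (j : J) (y : Y) (z : Z j) :
    (∑ z', p j y z') * condKernel p y j z = p j y z := by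
  unfold condKernel
  split_ifs with hy
  · rw [hy, zero_mul, (sum_eq_zero_iff_of_nonneg fun z' _ => pnn j y z').mp hy z (mem_univ z)]
  · exact mul_div_cancel₀ _ hy

theorem isCompatibleFamily_condKernel [Preorder J] [∀ j, DecidableEq (Z j)]
    {π : ∀ {i j : J}, i ≤ j → Z j → Z i} (hp : ∀ y, IsCompatibleFamily π fun j => p j y) (y : Y) :
    IsCompatibleFamily π (condKernel p y) := by
  intro i j h z
  unfold condKernel
  rw [(hp y).sum_eq h]
  split_ifs
  · exact isCompatibleFamily_sum hp h z
  · exact (hp y).div_const _ h z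

end

theorem stmt10_general {J : Type*} [Preorder J]
    {Y : Type*} [Fintype Y]
    (Z : J → Type*) [∀ j, Fintype (Z j)] [∀ j, DecidableEq (Z j)]
    (π : ∀ {i j : J}, i ≤ j → Z j → Z i)
    (p : ∀ j, Y → Z j → ℝ)
    (pnn : ∀ j y z, 0 ≤ p j y z)
    (psum : ∀ j, ∑ y, ∑ z, p j y z = 1)
    (pcompat : ∀ {i j : J} (h : i ≤ j) (y : Y) (z : Z i),
      p i y z = ∑ z' ∈ Finset.univ.filter (fun z' => π h z' = z), p j y z') :
    ∃ k : Y → ∀ j, Z j → ℝ,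
      (∀ y j z, 0 ≤ k y j z) ∧
      (∀ y j, ∑ z, k y j z = 1) ∧
      (∀ (y : Y) {i j : J} (h : i ≤ j) (z : Z i),
        k y i z = ∑ z' ∈ Finset.univ.filter (fun z' => π h z' = z), k y j z') ∧
      (∀ j y z, p j y z = (∑ z', p j y z') * k y j z) := by
  have hp : ∀ y, IsCompatibleFamily π fun j => p j y := fun y _ _ h z => pcompat h y z
  exact ⟨condKernel p, condKernel_nonneg pnn, fun y j => sum_condKernel (psum j) y,
    fun y _ _ h z => isCompatibleFamily_condKernel hp y h z,
    fun j y z => (marginal_mul_condKernel pnn j y z).symm⟩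

/-- Conditionals exist for finite-marginal kernels into a profinite (cofiltered) limit
`L = lim_j Z_j`: given a probability measure `p` on `Y × L`, presented as a compatible
family of probability vectors `p j ∈ I(Y × Z j)`, there is a kernel `k` from `Y` to
probability measures on `L` (a compatible family of probability vectors for each `y`)
with `p j (y, z) = (∑ z', p j (y, z')) * k y j z`. -/
theorem stmt10 {J : Type*} [Preorder J] [IsDirected J (· ≤ ·)] [Nonempty J]
    {Y : Type*} [Fintype Y]
    (Z : J → Type*) [∀ j, Fintype (Z j)] [∀ j, DecidableEq (Z j)]
    (π : ∀ {i j : J}, i ≤ j → Z j → Z i)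
    (πid : ∀ (j : J) (z : Z j), π (le_refl j) z = z)
    (πcomp : ∀ {i j k : J} (hij : i ≤ j) (hjk : j ≤ k) (z : Z k),
      π hij (π hjk z) = π (hij.trans hjk) z)
    (p : ∀ j, Y → Z j → ℝ)
    (pnn : ∀ j y z, 0 ≤ p j y z)
    (psum : ∀ j, ∑ y, ∑ z, p j y z = 1)
    (pcompat : ∀ {i j : J} (h : i ≤ j) (y : Y) (z : Z i),
      p i y z = ∑ z' ∈ Finset.univ.filter (fun z' => π h z' = z), p j y z') :
    ∃ k : Y → ∀ j, Z j → ℝ,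
      (∀ y j z, 0 ≤ k y j z) ∧
      (∀ y j, ∑ z, k y j z = 1) ∧
      (∀ (y : Y) {i j : J} (h : i ≤ j) (z : Z i),
        k y i z = ∑ z' ∈ Finset.univ.filter (fun z' => π h z' = z), k y j z') ∧
      (∀ j y z, p j y z = (∑ z', p j y z') * k y j z) :=
  stmt10_general Z π p pnn psum pcompat
end
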